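/- Let G be a simple connected graph on n ≥ 4 vertices. Then q₁(G) ≥ d₁(G) + 1, where q₁(G) is the largest eigenvalue of the signless Laplacian Q(G) and d₁(G) is the maximum degree of G, with equality if and only if G is isomorphic to the star Sₙ. -/

import Mathlib

open Matrix

/-- The signless Laplacian matrix `Q(G) = D + A` of a simple graph, over `ℝ`. -/
def sLapMatrix {m : ℕ} (G : SimpleGraph (Fin m)) [DecidableRel G.Adj] :
    Matrix (Fin m) (Fin m) ℝ :=
  G.degMatrix ℝ + G.adjMatrix ℝ

/-- `q` lists the eigenvalues of `A` (with multiplicity) in non-increasing order. -/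
def IsEigSeq {m : ℕ} (A : Matrix (Fin m) (Fin m) ℝ) (q : Fin m → ℝ) : Prop :=
  Antitone q ∧ ∃ (hA : A.IsHermitian) (σ : Equiv.Perm (Fin m)),
    ∀ i, q i = hA.eigenvalues (σ i)

/-- `d` lists the degrees of `G` (with multiplicity) in non-increasing order. -/
def IsDegSeq {m : ℕ} (G : SimpleGraph (Fin m)) [DecidableRel G.Adj] (d : Fin m → ℕ) : Prop :=
  Antitone d ∧ ∃ σ : Equiv.Perm (Fin m), ∀ i, d i = G.degree (σ i)

/-!
The largest signless Laplacian eigenvalue is the maximum of the Rayleigh quotient `xᵀQx / xᵀx`,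
and `xᵀQx = ∑_{ij ∈ E} (x_i + x_j)²`. For a vertex `v` of maximum degree `Δ`, the vector equal to
`Δ` at `v`, to `1` on the neighbours of `v` and to `0` elsewhere has Rayleigh quotient `Δ + 1` plus
a nonnegative contribution of the edges avoiding `v`. That contribution vanishes only if no such
edge meets a neighbour of `v`, which for a connected graph forces `G` to be the star centred at
`v`. Conversely, for the star `K_{1,n-1}` Cauchy–Schwarz gives `xᵀQx ≤ n xᵀx`, so `q₁ = n = Δ + 1`.
-/

open Finset SimpleGraph

namespace Matrix.IsHermitian
variable {ι : Type*} [Fintype ι] [DecidableEq ι] {A : Matrix ι ι ℝ}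

open scoped MatrixOrder in
theorem forall_eigenvalues_le_iff (hA : A.IsHermitian) (μ : ℝ) :
    (∀ i, hA.eigenvalues i ≤ μ) ↔ ∀ x, x ⬝ᵥ (A *ᵥ x) ≤ μ * (x ⬝ᵥ x) := by
  have hspec := le_algebraMap_iff_spectrum_le (r := μ) (a := A) hA
  rw [hA.spectrum_real_eq_range_eigenvalues, Set.forall_mem_range] at hspec
  have hμ : (algebraMap ℝ (Matrix ι ι ℝ) μ - A).IsHermitian :=
    (isHermitian_diagonal _).sub hA
  rw [← hspec, le_iff, posSemidef_iff_dotProduct_mulVec, and_iff_right hμ]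
  simp only [star_trivial, Algebra.algebraMap_eq_smul_one, sub_mulVec, smul_mulVec, one_mulVec,
    dotProduct_sub, dotProduct_smul, smul_eq_mul, sub_nonneg]
end Matrix.IsHermitian

theorem IsEigSeq.apply_zero_le_iff {m : ℕ} {A : Matrix (Fin m) (Fin m) ℝ} {q : Fin m → ℝ}
    (hq : IsEigSeq A q) (h0 : 0 < m) (μ : ℝ) :
    q ⟨0, h0⟩ ≤ μ ↔ ∀ x, x ⬝ᵥ (A *ᵥ x) ≤ μ * (x ⬝ᵥ x) := by
  obtain ⟨hanti, hA, σ, hσ⟩ := hq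
  rw [← hA.forall_eigenvalues_le_iff]
  refine ⟨fun h i => ?_, fun h => hσ _ ▸ h _⟩
  calc hA.eigenvalues i = q (σ.symm i) := by rw [hσ, Equiv.apply_symm_apply]
    _ ≤ q ⟨0, h0⟩ := hanti (Nat.zero_le _)
    _ ≤ μ := h

theorem IsDegSeq.apply_zero {m : ℕ} {G : SimpleGraph (Fin m)} [DecidableRel G.Adj]
    {d : Fin m → ℕ} (hd : IsDegSeq G d) (h0 : 0 < m) : d ⟨0, h0⟩ = G.maxDegree := by
  obtain ⟨hanti, σ, hσ⟩ := hd
  refine le_antisymm (hσ _ ▸ G.degree_le_maxDegree _) (G.maxDegree_le_of_forall_degree_le _ ?_)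
  intro v
  calc G.degree v = d (σ.symm v) := by rw [hσ, Equiv.apply_symm_apply]
    _ ≤ d ⟨0, h0⟩ := hanti (Nat.zero_le _)

theorem Finset.sum_add_sq_le {ι : Type*} (s : Finset ι) (a : ℝ) (y : ι → ℝ) :
    ∑ j ∈ s, (a + y j) ^ 2 ≤ (#s + 1) * (a ^ 2 + ∑ j ∈ s, y j ^ 2) := by
  have hcs := sq_sum_le_card_mul_sum_sq (s := s) (f := y)
  have hexpand : ∑ j ∈ s, (a + y j) ^ 2 = #s * a ^ 2 + 2 * a * ∑ j ∈ s, y j + ∑ j ∈ s, y j ^ 2 := by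
    simp only [add_sq, sum_add_distrib, sum_const, nsmul_eq_mul, mul_sum]
  rw [hexpand]
  nlinarith [sq_nonneg (a - ∑ j ∈ s, y j)]

namespace SimpleGraph

variable {V : Type*} [Fintype V] [DecidableEq V] (G : SimpleGraph V) [DecidableRel G.Adj]

/-- The Perron vector of the star formed by `v` and its neighbours: its signless Laplacian
eigenvalue is `deg v + 1`. -/
def starVector (v : V) : V → ℝ :=
  fun u => if u = v then G.degree v else if G.Adj v u then 1 else 0

theorem starVector_dotProduct_self (v : V) :
    G.starVector v ⬝ᵥ G.starVector v = G.degree v * (G.degree v + 1) := by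
  have hrest : ∑ u ∈ univ.erase v, G.starVector v u * G.starVector v u = G.degree v := by
    rw [G.degree_eq_sum_if_adj (R := ℝ), ← add_sum_erase _ _ (mem_univ v),
      if_neg (G.irrefl (v := v)), zero_add]
    refine sum_congr rfl fun u hu => ?_
    simp [starVector, ne_of_mem_erase hu]
  rw [dotProduct, ← add_sum_erase _ _ (mem_univ v), hrest]
  simp only [starVector, if_true]
  ring

end SimpleGraph

section SignlessLaplacian

variable {m : ℕ} (G : SimpleGraph (Fin m)) [DecidableRel G.Adj]

theorem dotProduct_sLapMatrix_mulVec (x : Fin m → ℝ) :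
    x ⬝ᵥ (sLapMatrix G *ᵥ x) =
      (∑ i, ∑ j, if G.Adj i j then (x i + x j) ^ 2 else 0) / 2 := by
  simp_rw [sLapMatrix, add_mulVec, dotProduct_add, dotProduct_mulVec_degMatrix,
    dotProduct_mulVec_adjMatrix, ← sum_add_distrib, degree_eq_sum_if_adj, sum_mul, ite_mul,
    one_mul, zero_mul, ← sum_add_distrib, ite_add_ite, add_zero]
  rw [← add_self_div_two (∑ i, ∑ j, _)]
  conv_lhs => enter [1, 2, 2, i, 2, j]; rw [if_congr (G.adj_comm i j) rfl rfl]
  conv_lhs => enter [1, 2]; rw [Finset.sum_comm]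
  simp_rw [← sum_add_distrib, ite_add_ite]
  congr 2 with i
  congr 2 with j
  ring_nf

theorem dotProduct_sLapMatrix_mulVec_eq_at (v : Fin m) (x : Fin m → ℝ) :
    x ⬝ᵥ (sLapMatrix G *ᵥ x) = ∑ j ∈ G.neighborFinset v, (x v + x j) ^ 2 +
      (∑ i ∈ univ.erase v, ∑ j ∈ univ.erase v,
        if G.Adj i j then (x i + x j) ^ 2 else 0) / 2 := by
  set f : Fin m → Fin m → ℝ := fun i j => if G.Adj i j then (x i + x j) ^ 2 else 0
  have hrow : ∑ j, f v j = ∑ j ∈ G.neighborFinset v, (x v + x j) ^ 2 := by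
    rw [neighborFinset_eq_filter, sum_filter]
  have hcol : ∑ i ∈ univ.erase v, f i v = ∑ j, f v j := by
    rw [← add_sum_erase _ _ (mem_univ v)]
    simp [f, G.adj_comm, add_comm]
  have hsplit : ∑ i, ∑ j, f i j
      = ∑ j, f v j + ∑ i ∈ univ.erase v, f i v + ∑ i ∈ univ.erase v, ∑ j ∈ univ.erase v, f i j := by
    rw [← add_sum_erase _ _ (mem_univ v), add_assoc, ← sum_add_distrib]
    congr 1
    exact sum_congr rfl fun i _ => (add_sum_erase _ _ (mem_univ v)).symm
  rw [dotProduct_sLapMatrix_mulVec, hsplit, hcol, hrow]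
  ring

theorem dotProduct_sLapMatrix_mulVec_starVector (v : Fin m) :
    G.starVector v ⬝ᵥ (sLapMatrix G *ᵥ G.starVector v) =
      (G.degree v + 1) * (G.starVector v ⬝ᵥ G.starVector v) +
      (∑ i ∈ univ.erase v, ∑ j ∈ univ.erase v,
        if G.Adj i j then (G.starVector v i + G.starVector v j) ^ 2 else 0) / 2 := by
  have hedge : ∀ j ∈ G.neighborFinset v,
      (G.starVector v v + G.starVector v j) ^ 2 = ((G.degree v : ℝ) + 1) ^ 2 := by
    intro j hj
    rw [mem_neighborFinset] at hj
    simp [starVector, hj, hj.ne']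
  rw [dotProduct_sLapMatrix_mulVec_eq_at G v, sum_congr rfl hedge, sum_const,
    card_neighborFinset_eq_degree, nsmul_eq_mul, starVector_dotProduct_self]
  ring

variable {G}

theorem degree_add_one_le_of_sLapMatrix_quad_le {v : Fin m} (hv : 0 < G.degree v) {μ : ℝ}
    (hμ : ∀ x, x ⬝ᵥ (sLapMatrix G *ᵥ x) ≤ μ * (x ⬝ᵥ x)) : (G.degree v : ℝ) + 1 ≤ μ := by
  have hx := hμ (G.starVector v)
  rw [dotProduct_sLapMatrix_mulVec_starVector, starVector_dotProduct_self] at hx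
  have hrest : 0 ≤ ∑ i ∈ univ.erase v, ∑ j ∈ univ.erase v,
      if G.Adj i j then (G.starVector v i + G.starVector v j) ^ 2 else 0 := by
    positivity
  have hnorm : (0 : ℝ) < G.degree v * (G.degree v + 1) := by positivity
  exact le_of_mul_le_mul_right (by linarith) hnorm

theorem not_adj_of_sLapMatrix_quad_le_degree_add_one {v : Fin m}
    (hμ : ∀ x, x ⬝ᵥ (sLapMatrix G *ᵥ x) ≤ (G.degree v + 1) * (x ⬝ᵥ x))
    {i j : Fin m} (hi : i ≠ v) (hj : j ≠ v) (hij : G.Adj i j) : ¬ G.Adj v j := by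
  intro hvj
  set x := G.starVector v
  have hx := hμ x
  rw [dotProduct_sLapMatrix_mulVec_starVector] at hx
  have hterm : (x i + x j) ^ 2 ≤ ∑ i ∈ univ.erase v, ∑ j ∈ univ.erase v,
      if G.Adj i j then (x i + x j) ^ 2 else 0 := by
    calc (x i + x j) ^ 2 = if G.Adj i j then (x i + x j) ^ 2 else 0 := (if_pos hij).symm
      _ ≤ ∑ j ∈ univ.erase v, if G.Adj i j then (x i + x j) ^ 2 else 0 :=
        single_le_sum (f := fun j => if G.Adj i j then (x i + x j) ^ 2 else 0)
          (fun _ _ => by positivity) (mem_erase.2 ⟨hj, mem_univ j⟩)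
      _ ≤ _ := single_le_sum (f := fun i => ∑ j ∈ univ.erase v,
          if G.Adj i j then (x i + x j) ^ 2 else 0) (fun _ _ => by positivity)
          (mem_erase.2 ⟨hi, mem_univ i⟩)
  have hxi : 0 ≤ x i := by simp only [x, starVector]; split_ifs <;> positivity
  have hxj : x j = 1 := by simp [x, starVector, hj, hvj]
  nlinarith

theorem dotProduct_sLapMatrix_mulVec_le_of_eq_starGraph {c : Fin m} (hG : G = starGraph c)
    (x : Fin m → ℝ) :
    x ⬝ᵥ (sLapMatrix G *ᵥ x) ≤ m * (x ⬝ᵥ x) := by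
  have hnbr : G.neighborFinset c = univ.erase c :=
    (G.neighborFinset_eq_erase_univ c).2 (hG ▸ isUniversal_starGraph_self)
  have hrest : (∑ i ∈ univ.erase c, ∑ j ∈ univ.erase c,
      if G.Adj i j then (x i + x j) ^ 2 else 0) = 0 :=
    sum_eq_zero fun i hi => sum_eq_zero fun j hj => if_neg <| by
      subst hG; simp [ne_of_mem_erase hi, ne_of_mem_erase hj]
  have hcard : (#(univ.erase c) : ℝ) + 1 = m := by
    rw [card_erase_of_mem (mem_univ c), card_univ, Fintype.card_fin,
      Nat.cast_sub (Fin.pos c), Nat.cast_one, sub_add_cancel]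
  rw [dotProduct_sLapMatrix_mulVec_eq_at G c, hnbr, hrest, dotProduct,
    ← add_sum_erase _ _ (mem_univ c), ← hcard]
  simpa only [zero_div, add_zero, sq] using sum_add_sq_le (univ.erase c) (x c) x

end SignlessLaplacian

namespace SimpleGraph

variable {V W : Type*}

theorem Connected.eq_starGraph {G : SimpleGraph V} {v : V} (hG : G.Connected)
    (h : ∀ ⦃i j⦄, i ≠ v → j ≠ v → G.Adj i j → ¬ G.Adj v j) : G = starGraph v := by
  -- No edge leaves the closed neighbourhood of `v`, so by connectedness it is everything.
  have huniv : G.IsUniversal v := by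
    intro w hvw
    by_contra hw
    obtain ⟨p⟩ := hG.preconnected v w
    obtain ⟨d, -, hfst, hsnd⟩ :=
      p.exists_boundary_dart {u | u = v ∨ G.Adj v u} (Or.inl rfl) (by simp [hvw.symm, hw])
    simp only [Set.mem_ofPred_eq, not_or] at hfst hsnd
    rcases hfst with hfst | hfst
    · exact hsnd.2 (hfst ▸ d.adj)
    · exact h hsnd.1 (G.ne_of_adj hfst).symm d.adj.symm hfst
  ext a b
  rw [starGraph_adj]
  refine ⟨fun hab => ⟨G.ne_of_adj hab, ?_⟩, ?_⟩
  · by_contra! hne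
    exact h hne.1 hne.2 hab (huniv (Ne.symm hne.2))
  · rintro ⟨hab, rfl | rfl⟩
    · exact huniv hab
    · exact (huniv (Ne.symm hab)).symm

theorem completeBipartiteGraph_fin_one_eq_starGraph :
    completeBipartiteGraph (Fin 1) W = starGraph (Sum.inl 0) := by
  ext (a | a) (b | b) <;> simp [Fin.fin_one_eq_zero]

def Iso.starGraph (e : V ≃ W) (v : V) : starGraph v ≃g starGraph (e v) :=
  ⟨e, by simp [e.apply_eq_iff_eq]⟩

theorem eq_starGraph_of_iso {G : SimpleGraph V} {w : W} (f : G ≃g starGraph w) :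
    G = starGraph (f.symm w) := by
  ext a b
  rw [← f.map_adj_iff, starGraph_adj, starGraph_adj, f.injective.ne_iff,
    RelIso.eq_symm_apply, RelIso.eq_symm_apply]

theorem nonempty_iso_completeBipartiteGraph_fin_one_iff [Fintype V] [Fintype W]
    (hcard : Fintype.card V = Fintype.card W + 1) {G : SimpleGraph V} :
    Nonempty (G ≃g completeBipartiteGraph (Fin 1) W) ↔ ∃ v, G = starGraph v := by
  rw [completeBipartiteGraph_fin_one_eq_starGraph]
  refine ⟨fun ⟨f⟩ => ⟨_, eq_starGraph_of_iso f⟩, ?_⟩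
  rintro ⟨v, rfl⟩
  classical
  let e₀ : V ≃ Fin 1 ⊕ W := Fintype.equivOfCardEq (by simp [hcard, add_comm])
  let e := (Equiv.swap v (e₀.symm (Sum.inl 0))).trans e₀
  have he : e v = Sum.inl 0 := by simp [e]
  exact ⟨he ▸ Iso.starGraph e v⟩

end SimpleGraph

theorem q_one_ge_d_one_add_one {n : ℕ} (hn : 4 ≤ n)
    (G : SimpleGraph (Fin n)) [DecidableRel G.Adj] (hG : G.Connected)
    (q : Fin n → ℝ) (hq : IsEigSeq (sLapMatrix G) q)
    (d : Fin n → ℕ) (hd : IsDegSeq G d) :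
    q ⟨0, by omega⟩ ≥ (d ⟨0, by omega⟩ : ℝ) + 1 ∧
    (q ⟨0, by omega⟩ = (d ⟨0, by omega⟩ : ℝ) + 1 ↔
      Nonempty (G ≃g completeBipartiteGraph (Fin 1) (Fin (n - 1)))) := by
  have h0 : 0 < n := by omega
  have : Nontrivial (Fin n) := Fin.nontrivial_iff_two_le.mpr (by omega)
  have hstar := nonempty_iso_completeBipartiteGraph_fin_one_iff (G := G) (W := Fin (n - 1))
    (by simp only [Fintype.card_fin]; omega)
  obtain ⟨v, hv⟩ := G.exists_maximal_degree_vertex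
  rw [hd.apply_zero h0, hv, hstar]
  have hquad := (hq.apply_zero_le_iff h0 _).mp le_rfl
  have hlower : (G.degree v : ℝ) + 1 ≤ q ⟨0, h0⟩ :=
    degree_add_one_le_of_sLapMatrix_quad_le (hG.preconnected.degree_pos_of_nontrivial v) hquad
  refine ⟨hlower, fun hq0 => ⟨v, hG.eq_starGraph fun i j hi hj hij => ?_⟩, ?_⟩
  · exact not_adj_of_sLapMatrix_quad_le_degree_add_one (hq0 ▸ hquad) hi hj hij
  · rintro ⟨c, hc⟩
    have hupper : q ⟨0, h0⟩ ≤ n :=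
      (hq.apply_zero_le_iff h0 _).mpr (dotProduct_sLapMatrix_mulVec_le_of_eq_starGraph hc)
    have hdeg_c : G.degree c = n - 1 := by
      simpa using (G.degree_eq_card_sub_one c).mpr (hc ▸ isUniversal_starGraph_self)
    have hdeg_v : G.degree v = n - 1 := by
      have hlt : G.degree v < n := by simpa using G.degree_lt_card_verts v
      have hle : n - 1 ≤ G.degree v := hdeg_c ▸ hv ▸ G.degree_le_maxDegree c
      omega
    rw [hdeg_v, Nat.cast_sub (by omega), Nat.cast_one, sub_add_cancel] at hlower ⊢
    exact le_antisymm hupper hlower
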